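/- arXiv:2001.08347 — 2 statements merged into one kernel-verified Lean document; each statement's English description precedes it below -/
import Mathlib

section
/- Let p be a prime with p ≡ 3 (mod 4). Writing the rising factorials as rational numbers, (3/4)_{(p²-1)/2} / (5/4)_{(p²-1)/2} = p · (1/4)_{(p+1)/2} / (3/4)_{(p-1)/2} · [Γ_p((2p²+1)/4) Γ_p(5/4)] / [Γ_p(3/4) Γ_p((2p²+3)/4)], an exact identity in ℚ_p. -/
open Finset Filter

/-- Morita's `p`-adic Gamma function at natural numbers:
`Γ_p(n) = (-1)^n ∏_{1 ≤ k < n, p ∤ k} k`. -/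
noncomputable def pGammaNat (p : ℕ) [Fact p.Prime] (n : ℕ) : ℤ_[p] :=
  (-1) ^ n * ∏ k ∈ (Finset.range n).filter (fun k => ¬ p ∣ k), (k : ℤ_[p])

/-- Morita's `p`-adic Gamma function on `ℤ_p`, the continuous extension of `pGammaNat`. -/
noncomputable def pGamma (p : ℕ) [Fact p.Prime] (x : ℤ_[p]) : ℤ_[p] :=
  limUnder (Filter.comap (Nat.cast : ℕ → ℤ_[p]) (nhds x)) (pGammaNat p)

/-- Extension of `pGamma` to `ℚ_p` (by `0` outside `ℤ_p`), used to take derivatives. -/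
noncomputable def pGammaQ (p : ℕ) [Fact p.Prime] (x : ℚ_[p]) : ℚ_[p] :=
  if h : ‖x‖ ≤ 1 then (pGamma p ⟨x, h⟩ : ℚ_[p]) else 0

/-!
Put `N = (p² - 1) / 2`, so that `(2p² + 1)/4 = 3/4 + N` and `(2p² + 3)/4 = 5/4 + N`. Iterating
`Γ_p(x + 1) = -x Γ_p(x)` for `x ∈ ℤ_pˣ` and `Γ_p(x + 1) = -Γ_p(x)` otherwise gives
`Γ_p(x) (x)_N = (-1)^N Γ_p(x + N) ∏ (x + j)`, the product running over the `j < N` with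
`p ∣ x + j`. For `x = 3/4` these are the `j ≡ (p - 3)/4 (mod p)`, contributing
`p^((p+1)/2) (1/4)_((p+1)/2)`; for `x = 5/4` they are the `j ≡ (3p - 5)/4 (mod p)`, contributing
`p^((p-1)/2) (3/4)_((p-1)/2)`.

The functional equation of `Γ_p` is inherited from that of `pGammaNat` once `Γ_p` is known to be
its limit; this holds because `pGammaNat` is `1`-Lipschitz for the `p`-adic metric, a consequence
of Wilson's theorem modulo `p^k`: the units of `ℤ/p^k` multiply to `-1` when `p` is odd.
-/

open Topology

theorem ZMod.eq_one_or_eq_neg_one_of_mul_self_eq_one {p : ℕ} [Fact p.Prime] (hp2 : p ≠ 2)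
    {k : ℕ} {x : ZMod (p ^ k)} (hx : x * x = 1) : x = 1 ∨ x = -1 := by
  have hp : p.Prime := Fact.out
  obtain ⟨a, rfl⟩ : ∃ a : ℤ, (a : ZMod (p ^ k)) = x := ⟨x.valMinAbs, x.coe_valMinAbs⟩
  have hdvd : (p : ℤ) ^ k ∣ (a - 1) * (a + 1) := by
    have : (((a - 1) * (a + 1) : ℤ) : ZMod (p ^ k)) = 0 := by
      push_cast
      linear_combination hx
    exact_mod_cast (ZMod.intCast_zmod_eq_zero_iff_dvd _ _).mp this
  have hnot : ¬ ((p : ℤ) ∣ a - 1 ∧ (p : ℤ) ∣ a + 1) := fun ⟨h1, h2⟩ => by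
    have h : (p : ℤ) ∣ 2 := by simpa using dvd_sub h2 h1
    exact hp2 ((Nat.prime_dvd_prime_iff_eq hp Nat.prime_two).mp (by exact_mod_cast h))
  have hpi : Prime (p : ℤ) := Nat.prime_iff_prime_int.mp hp
  by_cases h : (p : ℤ) ∣ a + 1
  · right
    have := hpi.pow_dvd_of_dvd_mul_left k (fun h' => hnot ⟨h', h⟩) hdvd
    rw [eq_neg_iff_add_eq_zero]
    exact_mod_cast (ZMod.intCast_zmod_eq_zero_iff_dvd (a + 1) (p ^ k)).mpr (by exact_mod_cast this)
  · left
    have := hpi.pow_dvd_of_dvd_mul_right k h hdvd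
    rw [← sub_eq_zero]
    exact_mod_cast (ZMod.intCast_zmod_eq_zero_iff_dvd (a - 1) (p ^ k)).mpr (by exact_mod_cast this)

theorem ZMod.prod_units_prime_pow {p : ℕ} [Fact p.Prime] (hp2 : p ≠ 2) (k : ℕ) :
    ∏ u : (ZMod (p ^ k))ˣ, u = -1 := by
  classical
  have hinv (u : (ZMod (p ^ k))ˣ) (h : u⁻¹ = u) : u = 1 ∨ u = -1 := by
    have hu : (u : ZMod (p ^ k)) * u = 1 := by
      simpa using congrArg Units.val (mul_eq_one_iff_eq_inv.mpr h.symm)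
    rcases ZMod.eq_one_or_eq_neg_one_of_mul_self_eq_one hp2 hu with h1 | h1
    · exact Or.inl (Units.ext h1)
    · exact Or.inr (Units.ext h1)
  have : ∏ u ∈ (univ : Finset (ZMod (p ^ k))ˣ).erase (-1), u = 1 :=
    prod_involution (fun u _ => u⁻¹) (by simp)
      (fun u hu hu1 h => hu1 ((hinv u h).resolve_right (mem_erase.mp hu).1))
      (fun u hu => by simpa [inv_eq_iff_eq_inv] using hu) (by simp)
  rw [← insert_erase (mem_univ (-1 : (ZMod (p ^ k))ˣ)), prod_insert (notMem_erase _ _), this,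
    mul_one]

theorem ZMod.prod_range_natCast_add {M : Type*} [CommMonoid M] (m n : ℕ) [NeZero m]
    (f : ZMod m → M) : ∏ j ∈ range m, f ((n + j : ℕ) : ZMod m) = ∏ z, f z := by
  rw [← Fin.prod_univ_eq_prod_range (fun j => f ((n + j : ℕ) : ZMod m))]
  refine Fintype.prod_bijective (fun j : Fin m => ((n + j : ℕ) : ZMod m)) ?_ _ _ fun _ => rfl
  refine (Fintype.bijective_iff_injective_and_card _).mpr ⟨fun a b hab => Fin.ext ?_, by simp⟩
  have hab : ((a : ℕ) : ZMod m) = (b : ℕ) := by simpa using hab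
  rw [← ZMod.val_cast_of_lt a.is_lt, hab, ZMod.val_cast_of_lt b.is_lt]

theorem prod_filter_isUnit_eq_prod_units {M : Type*} [CommMonoid M] [Fintype M] [Fintype Mˣ]
    [DecidablePred (@IsUnit M _)] :
    ∏ x ∈ univ.filter IsUnit, x = ∏ u : Mˣ, (u : M) := by
  have : univ.filter (@IsUnit M _) = univ.map ⟨Units.val, Units.val_injective⟩ := by
    ext x
    simp [IsUnit, eq_comm]
  rw [this, prod_map]
  rfl

theorem ZMod.prod_range_filter_not_dvd_eq_neg_one {p : ℕ} [Fact p.Prime] (hp2 : p ≠ 2) {k : ℕ}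
    (hk : k ≠ 0) (n : ℕ) :
    ∏ j ∈ range (p ^ k) with ¬ p ∣ n + j, ((n + j : ℕ) : ZMod (p ^ k)) = -1 := by
  classical
  have hunit (a : ℕ) : IsUnit (a : ZMod (p ^ k)) ↔ ¬ p ∣ a := by
    rw [ZMod.isUnit_iff_coprime, Nat.coprime_pow_right_iff (Nat.pos_of_ne_zero hk),
      Nat.coprime_comm, (Fact.out : p.Prime).coprime_iff_not_dvd]
  simp_rw [← hunit, prod_filter (fun j => IsUnit ((n + j : ℕ) : ZMod (p ^ k)))]
  rw [ZMod.prod_range_natCast_add (p ^ k) n (fun z => if IsUnit z then z else 1), ← prod_filter,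
    prod_filter_isUnit_eq_prod_units, ← Units.coe_prod, ZMod.prod_units_prime_pow hp2,
    Units.val_neg, Units.val_one]

theorem exists_tendsto_comap_nhds_of_dist_le {α β γ : Type*} [PseudoMetricSpace β]
    [PseudoMetricSpace γ] [CompleteSpace γ] {e : α → β} {f : α → γ}
    (hf : ∀ a b, dist (f a) (f b) ≤ dist (e a) (e b)) (x : β) [(comap e (𝓝 x)).NeBot] :
    ∃ y, Tendsto f (comap e (𝓝 x)) (𝓝 y) := by
  let : PseudoMetricSpace α := PseudoMetricSpace.induced e ‹_›
  have hcauchy : Cauchy (comap e (𝓝 x)) := cauchy_nhds.comap le_rfl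
  have hlip : LipschitzWith 1 f := LipschitzWith.of_dist_le_mul fun a b => by
    rw [NNReal.coe_one, one_mul]
    exact hf a b
  exact cauchy_map_iff_exists_tendsto.mp (hcauchy.map hlip.uniformContinuous)

theorem prod_range_filter_mod_eq {M : Type*} [CommMonoid M] (f : ℕ → M) {p k N L : ℕ}
    (hk : k < p) (hL : ∀ i, k + p * i < N ↔ i < L) :
    ∏ j ∈ range N with j % p = k, f j = ∏ i ∈ range L, f (k + p * i) := by
  have himage : (range N).filter (· % p = k) = (range L).image (fun i => k + p * i) := by
    ext j
    simp only [mem_filter, mem_range, mem_image]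
    constructor
    · rintro ⟨hj, rfl⟩
      exact ⟨j / p, (hL _).mp (by rwa [Nat.mod_add_div]), Nat.mod_add_div j p⟩
    · rintro ⟨i, hi, rfl⟩
      exact ⟨(hL i).mpr hi, by rw [Nat.add_mul_mod_self_left, Nat.mod_eq_of_lt hk]⟩
  rw [himage, prod_image fun a _ b _ h => ?_]
  exact Nat.eq_of_mul_eq_mul_left (pos_of_gt hk) (Nat.add_left_cancel h)

namespace PadicInt

variable {p : ℕ} [Fact p.Prime]

instance comap_natCast_nhds_neBot (x : ℤ_[p]) : (comap (Nat.cast : ℕ → ℤ_[p]) (𝓝 x)).NeBot :=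
  comap_neBot fun s hs => by
    obtain ⟨_, hs, n, rfl⟩ := mem_closure_iff_nhds.mp (denseRange_natCast x) s hs
    exact ⟨n, hs⟩

@[simp, norm_cast]
theorem coe_prod {α : Type*} (s : Finset α) (f : α → ℤ_[p]) :
    ((∏ z ∈ s, f z : ℤ_[p]) : ℚ_[p]) = ∏ z ∈ s, (f z : ℚ_[p]) :=
  map_prod Coe.ringHom f s

@[simp, norm_cast]
theorem coe_ofNat (n : ℕ) [n.AtLeastTwo] :
    (((no_index (OfNat.ofNat n)) : ℤ_[p]) : ℚ_[p]) = OfNat.ofNat n :=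
  map_ofNat Coe.ringHom n

theorem isUnit_natCast_iff {n : ℕ} : IsUnit (n : ℤ_[p]) ↔ ¬ p ∣ n := by
  rw [isUnit_iff, norm_natCast_eq_one_iff, (Fact.out : p.Prime).coprime_iff_not_dvd]

theorem isUnit_iff_of_norm_sub_lt_one {a b : ℤ_[p]} (h : ‖a - b‖ < 1) :
    IsUnit a ↔ IsUnit b := by
  rw [norm_lt_one_iff_dvd] at h
  rw [← not_iff_not, not_isUnit_iff, not_isUnit_iff, norm_lt_one_iff_dvd, norm_lt_one_iff_dvd]
  exact ⟨fun ha => by simpa using dvd_sub ha h, fun hb => by simpa using dvd_add h hb⟩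

theorem not_isUnit_add_natCast_iff {x y : ℤ_[p]} {k : ℕ} (hk : k < p) (hxy : x + k = p * y)
    (j : ℕ) : ¬ IsUnit (x + j) ↔ j % p = k := by
  have hsplit : x + j = p * y + ((j - k : ℤ) : ℤ_[p]) := by
    push_cast
    linear_combination hxy
  rw [not_isUnit_iff, norm_lt_one_iff_dvd, hsplit, dvd_add_right (dvd_mul_right _ _),
    ← norm_lt_one_iff_dvd, norm_intCast_lt_one_iff, ← Nat.modEq_iff_dvd, Nat.ModEq,
    Nat.mod_eq_of_lt hk, eq_comm]

open Classical in
theorem prod_range_filter_not_isUnit {x y : ℤ_[p]} {k N L : ℕ} (hk : k < p)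
    (hxy : x + k = p * y) (hL : ∀ i, k + p * i < N ↔ i < L) :
    ∏ j ∈ range N with ¬ IsUnit (x + (j : ℕ)), (x + j) =
      (p : ℤ_[p]) ^ L * ∏ i ∈ range L, (y + i) := by
  rw [filter_congr fun j _ => not_isUnit_add_natCast_iff hk hxy j,
    prod_range_filter_mod_eq _ hk hL]
  calc ∏ i ∈ range L, (x + ((k + p * i : ℕ) : ℤ_[p]))
      = ∏ i ∈ range L, (p * (y + i)) :=
        prod_congr rfl fun i _ => by push_cast; linear_combination hxy
    _ = _ := by rw [← pow_card_mul_prod, card_range]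

end PadicInt

section PadicGamma

open Classical

variable {p : ℕ} [Fact p.Prime]

theorem pGammaNat_add (n m : ℕ) :
    pGammaNat p (n + m) =
      (-1) ^ m * pGammaNat p n * ∏ j ∈ range m with ¬ p ∣ n + j, ((n + j : ℕ) : ℤ_[p]) := by
  simp only [pGammaNat, prod_filter, prod_range_add, pow_add]
  ring

theorem pGammaNat_succ (n : ℕ) :
    pGammaNat p (n + 1) = -(if IsUnit (n : ℤ_[p]) then (n : ℤ_[p]) else 1) * pGammaNat p n := by
  by_cases h : p ∣ n <;>
    simp [pGammaNat_add, prod_filter, PadicInt.isUnit_natCast_iff, h, mul_comm]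

theorem isUnit_pGammaNat (n : ℕ) : IsUnit (pGammaNat p n) :=
  (isUnit_neg_one.pow n).mul <| IsUnit.prod_iff.mpr fun _ hk =>
    PadicInt.isUnit_natCast_iff.mpr (mem_filter.mp hk).2

theorem pow_dvd_pGammaNat_add_pow_sub (hp2 : p ≠ 2) (n k : ℕ) :
    (p : ℤ_[p]) ^ k ∣ pGammaNat p (n + p ^ k) - pGammaNat p n := by
  rcases eq_or_ne k 0 with rfl | hk
  · simp
  set M := ∏ j ∈ range (p ^ k) with ¬ p ∣ n + j, (n + j)
  obtain ⟨c, hc⟩ : p ^ k ∣ M + 1 := by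
    rw [← ZMod.natCast_eq_zero_iff, Nat.cast_add, Nat.cast_one, Nat.cast_prod,
      ZMod.prod_range_filter_not_dvd_eq_neg_one hp2 hk, neg_add_cancel]
  have hM : (M : ℤ_[p]) + 1 = (p : ℤ_[p]) ^ k * c := by exact_mod_cast hc
  have hodd : Odd (p ^ k) := ((Fact.out : p.Prime).odd_of_ne_two hp2).pow
  rw [pGammaNat_add, hodd.neg_one_pow, ← Nat.cast_prod]
  exact ⟨-pGammaNat p n * c, by linear_combination (-pGammaNat p n) * hM⟩

theorem pow_dvd_pGammaNat_add_mul_pow_sub (hp2 : p ≠ 2) (n k t : ℕ) :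
    (p : ℤ_[p]) ^ k ∣ pGammaNat p (n + t * p ^ k) - pGammaNat p n := by
  induction t with
  | zero => simp
  | succ t ih =>
    rw [add_one_mul, ← add_assoc, ← sub_add_sub_cancel _ (pGammaNat p (n + t * p ^ k))]
    exact dvd_add (pow_dvd_pGammaNat_add_pow_sub hp2 _ k) ih

theorem natCast_sub_dvd_pGammaNat_sub (hp2 : p ≠ 2) (m n : ℕ) :
    ((m : ℤ_[p]) - n) ∣ pGammaNat p m - pGammaNat p n := by
  wlog h : n ≤ m generalizing m n
  · rw [← neg_sub, neg_dvd, ← neg_sub (pGammaNat p n), dvd_neg]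
    exact this n m (le_of_not_ge h)
  obtain ⟨d, rfl⟩ := Nat.exists_eq_add_of_le h
  rcases eq_or_ne d 0 with rfl | hd
  · simp
  obtain ⟨k, t, ht, rfl⟩ :=
    Nat.exists_eq_pow_mul_and_not_dvd hd p (Fact.out : p.Prime).one_lt.ne'
  rw [Nat.cast_add, add_sub_cancel_left, Nat.cast_mul, Nat.cast_pow,
    (PadicInt.isUnit_natCast_iff.mpr ht).mul_right_dvd, mul_comm]
  exact pow_dvd_pGammaNat_add_mul_pow_sub hp2 n k t

theorem norm_pGammaNat_sub_le (hp2 : p ≠ 2) (m n : ℕ) :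
    ‖pGammaNat p m - pGammaNat p n‖ ≤ ‖(m : ℤ_[p]) - n‖ := by
  obtain ⟨c, hc⟩ := natCast_sub_dvd_pGammaNat_sub hp2 m n
  rw [hc, norm_mul]
  exact mul_le_of_le_one_right (norm_nonneg _) (PadicInt.norm_le_one c)

theorem tendsto_pGammaNat (hp2 : p ≠ 2) (x : ℤ_[p]) :
    Tendsto (pGammaNat p) (comap Nat.cast (𝓝 x)) (𝓝 (pGamma p x)) :=
  tendsto_nhds_limUnder <| exists_tendsto_comap_nhds_of_dist_le
    (fun m n => by simpa only [dist_eq_norm] using norm_pGammaNat_sub_le hp2 m n) x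

theorem isUnit_pGamma (hp2 : p ≠ 2) (x : ℤ_[p]) : IsUnit (pGamma p x) :=
  PadicInt.isUnit_iff.mpr <| (isClosed_eq continuous_norm continuous_const).mem_of_tendsto
    (tendsto_pGammaNat hp2 x)
    (Eventually.of_forall fun n => PadicInt.isUnit_iff.mp (isUnit_pGammaNat n))

theorem pGamma_add_one (hp2 : p ≠ 2) (x : ℤ_[p]) :
    pGamma p (x + 1) = -(if IsUnit x then x else 1) * pGamma p x := by
  set F := comap (Nat.cast : ℕ → ℤ_[p]) (𝓝 x)
  have hcast : Tendsto (Nat.cast : ℕ → ℤ_[p]) F (𝓝 x) := tendsto_comap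
  have hshift : Tendsto (· + 1) F (comap Nat.cast (𝓝 (x + 1))) :=
    tendsto_comap_iff.mpr (by simpa [Function.comp_def] using hcast.add_const 1)
  have hlim : Tendsto (fun n : ℕ => -(if IsUnit x then (n : ℤ_[p]) else 1) * pGammaNat p n) F
      (𝓝 (-(if IsUnit x then x else 1) * pGamma p x)) := by
    split_ifs
    · exact hcast.neg.mul (tendsto_pGammaNat hp2 x)
    · exact tendsto_const_nhds.mul (tendsto_pGammaNat hp2 x)
  have heq : (fun n : ℕ => -(if IsUnit x then (n : ℤ_[p]) else 1) * pGammaNat p n)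
      =ᶠ[F] pGammaNat p ∘ (· + 1) := by
    filter_upwards [preimage_mem_comap (Metric.ball_mem_nhds x one_pos)] with n hn
    have hn : ‖(n : ℤ_[p]) - x‖ < 1 := by simpa [dist_eq_norm] using hn
    simp only [Function.comp_apply, pGammaNat_succ, PadicInt.isUnit_iff_of_norm_sub_lt_one hn]
  exact tendsto_nhds_unique ((tendsto_pGammaNat hp2 (x + 1)).comp hshift) (hlim.congr' heq)

theorem pGamma_add_nat (hp2 : p ≠ 2) (x : ℤ_[p]) (N : ℕ) :
    pGamma p (x + N) =
      (-1) ^ N * pGamma p x * ∏ j ∈ range N, if IsUnit (x + j) then x + j else 1 := by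
  induction N with
  | zero => simp
  | succ N ih =>
    rw [Nat.cast_succ, ← add_assoc, pGamma_add_one hp2, ih, prod_range_succ, pow_succ]
    ring

theorem pGamma_mul_prod_range_add (hp2 : p ≠ 2) (x : ℤ_[p]) (N : ℕ) :
    pGamma p x * ∏ j ∈ range N, (x + j) =
      (-1) ^ N * pGamma p (x + N) * ∏ j ∈ range N with ¬ IsUnit (x + (j : ℕ)), (x + j) := by
  rw [pGamma_add_nat hp2, ← prod_filter, ← prod_filter_mul_prod_filter_not (range N)
    (fun j => IsUnit (x + j))]
  simp only [← mul_assoc, ← pow_add, ← two_mul, pow_mul, neg_one_sq, one_pow, one_mul]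

theorem prod_range_add_eq_pow_mul_pGamma_div (hp2 : p ≠ 2) {x y : ℤ_[p]} {k N L : ℕ}
    (hk : k < p) (hxy : x + k = p * y) (hL : ∀ i, k + p * i < N ↔ i < L) :
    ∏ j ∈ range N, ((x : ℚ_[p]) + j) =
      (-1) ^ N * (p : ℚ_[p]) ^ L * (∏ i ∈ range L, ((y : ℚ_[p]) + i)) *
        pGamma p (x + N) / pGamma p x := by
  have h := congrArg ((↑) : ℤ_[p] → ℚ_[p]) (pGamma_mul_prod_range_add hp2 x N)
  rw [PadicInt.prod_range_filter_not_isUnit hk hxy hL] at h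
  push_cast at h
  rw [eq_div_iff (PadicInt.coe_ne_zero.mpr (isUnit_pGamma hp2 x).ne_zero)]
  linear_combination h

end PadicGamma

section QuarterShifts

variable {p : ℕ} [Fact p.Prime] {s : ℕ} {q half : ℤ_[p]}

theorem prod_range_three_quarters_add (hs : p = 4 * s + 3) (hq : 4 * q = 1)
    (hhalf : 2 * half = 1) :
    ∏ j ∈ range (8 * s ^ 2 + 12 * s + 4), (((3 * q : ℤ_[p]) : ℚ_[p]) + j) =
      (-1) ^ (8 * s ^ 2 + 12 * s + 4) * (p : ℚ_[p]) ^ (2 * s + 2) *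
        (∏ i ∈ range (2 * s + 2), ((q : ℚ_[p]) + i)) *
        pGamma p (q + p ^ 2 * half) / pGamma p (3 * q) := by
  have hpc : (p : ℤ_[p]) = 4 * s + 3 := by exact_mod_cast congrArg (Nat.cast : ℕ → ℤ_[p]) hs
  have hshift : 3 * q + ((8 * s ^ 2 + 12 * s + 4 : ℕ) : ℤ_[p]) = q + p ^ 2 * half := by
    rw [hpc]
    push_cast
    linear_combination (-(8 * (s : ℤ_[p]) ^ 2 + 12 * s + 4 + 2 * q)) * hhalf + half * hq
  -- `3/4 + j` is divisible by `p` exactly when `j ≡ s (mod p)`, since `3/4 + s = p/4`.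
  rw [prod_range_add_eq_pow_mul_pGamma_div (by omega) (k := s) (y := q) (L := 2 * s + 2)
    (by omega) (by rw [hpc]; linear_combination (-(s : ℤ_[p])) * hq)
    (fun i => by rw [hs]; constructor <;> intro h <;> nlinarith), hshift]

theorem prod_range_five_quarters_add (hs : p = 4 * s + 3) (hq : 4 * q = 1)
    (hhalf : 2 * half = 1) :
    ∏ j ∈ range (8 * s ^ 2 + 12 * s + 4), (((q + 1 : ℤ_[p]) : ℚ_[p]) + j) =
      (-1) ^ (8 * s ^ 2 + 12 * s + 4) * (p : ℚ_[p]) ^ (2 * s + 1) *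
        (∏ i ∈ range (2 * s + 1), (((3 * q : ℤ_[p]) : ℚ_[p]) + i)) *
        pGamma p (3 * q + p ^ 2 * half) / pGamma p (q + 1) := by
  have hpc : (p : ℤ_[p]) = 4 * s + 3 := by exact_mod_cast congrArg (Nat.cast : ℕ → ℤ_[p]) hs
  have hshift : q + 1 + ((8 * s ^ 2 + 12 * s + 4 : ℕ) : ℤ_[p]) = 3 * q + p ^ 2 * half := by
    rw [hpc]
    push_cast
    linear_combination (-(8 * (s : ℤ_[p]) ^ 2 + 12 * s + 4 + 2 * q)) * hhalf + (half - 1) * hq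
  -- `5/4 + j` is divisible by `p` exactly when `j ≡ 3s + 1 (mod p)`, since `5/4 + 3s + 1 = 3p/4`.
  rw [prod_range_add_eq_pow_mul_pGamma_div (by omega) (k := 3 * s + 1) (y := 3 * q)
    (L := 2 * s + 1) (by omega)
    (by rw [hpc]; push_cast; linear_combination (-3 * (s : ℤ_[p]) - 2) * hq)
    (fun i => by rw [hs]; constructor <;> intro h <;> nlinarith), hshift]

end QuarterShifts

theorem prod_factorization_base (p : ℕ) [Fact p.Prime] (h4 : p % 4 = 3)
    (q half : ℤ_[p]) (hq : 4 * q = 1) (hhalf : 2 * half = 1) :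
    (∏ j ∈ Finset.range ((p ^ 2 - 1) / 2), ((3 : ℚ_[p]) / 4 + (j : ℚ_[p])))
        / (∏ j ∈ Finset.range ((p ^ 2 - 1) / 2), ((5 : ℚ_[p]) / 4 + (j : ℚ_[p])))
      = (p : ℚ_[p]) * (∏ j ∈ Finset.range ((p + 1) / 2), ((1 : ℚ_[p]) / 4 + (j : ℚ_[p])))
          / (∏ j ∈ Finset.range ((p - 1) / 2), ((3 : ℚ_[p]) / 4 + (j : ℚ_[p])))
        * ((pGamma p (q + (p : ℤ_[p]) ^ 2 * half) : ℚ_[p]) * (pGamma p (q + 1) : ℚ_[p]))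
        / ((pGamma p (3 * q) : ℚ_[p]) * (pGamma p (3 * q + (p : ℤ_[p]) ^ 2 * half) : ℚ_[p])) := by
  have hp2 : p ≠ 2 := by omega
  obtain ⟨s, hs⟩ : ∃ s, p = 4 * s + 3 := ⟨p / 4, by omega⟩
  have hN : (p ^ 2 - 1) / 2 = 8 * s ^ 2 + 12 * s + 4 := by
    have : p ^ 2 = 16 * s ^ 2 + 24 * s + 9 := by rw [hs]; ring
    omega
  have hqQ : (q : ℚ_[p]) = 1 / 4 := by
    have h := congrArg ((↑) : ℤ_[p] → ℚ_[p]) hq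
    push_cast at h
    linear_combination h / 4
  have hP : ∏ i ∈ range (2 * s + 1), ((3 : ℚ_[p]) / 4 + i) ≠ 0 :=
    prod_ne_zero_iff.mpr fun i _ => by
      rw [show (3 : ℚ_[p]) / 4 + i = ((3 + 4 * i : ℕ) : ℚ_[p]) / 4 by push_cast; ring]
      exact div_ne_zero (Nat.cast_ne_zero.mpr (by omega)) (by norm_num)
  have hG (x : ℤ_[p]) : (pGamma p x : ℚ_[p]) ≠ 0 :=
    PadicInt.coe_ne_zero.mpr (isUnit_pGamma hp2 x).ne_zero
  have hp0 : (p : ℚ_[p]) ≠ 0 := Nat.cast_ne_zero.mpr (by omega)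
  have h34 : (3 : ℚ_[p]) / 4 = ((3 * q : ℤ_[p]) : ℚ_[p]) := by push_cast [hqQ]; ring
  have h54 : (5 : ℚ_[p]) / 4 = ((q + 1 : ℤ_[p]) : ℚ_[p]) := by push_cast [hqQ]; ring
  rw [h34] at hP
  rw [hN, show (p + 1) / 2 = 2 * s + 2 by omega, show (p - 1) / 2 = 2 * s + 1 by omega, h34, h54,
    ← hqQ, prod_range_three_quarters_add hs hq hhalf, prod_range_five_quarters_add hs hq hhalf]
  field_simp [hG]
  ring
end

section
/- Let p be a prime with p ≡ 3 (mod 4), and let r ≥ 1. Combined with Guo's identity, assuming ∑_{k=0}^{(p²-1)/2} ((1/2)_k / k!)³ ≡ p² ∏_{k=1}^{(p²-1)/2} (4k-1)/(4k+1) (mod p⁴), the main theorem implies ∑_{k=0}^{(p²-1)/2} ((1/2)_k / k!)³ ≡ p² (mod p⁴). -/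
open Finset Filter

lemma prod_add_nilpotent {R : Type*} [CommRing R] (x : R) (ε : ℕ → R)
    (hε : ∀ i j, ε i * ε j = 0) :
    ∀ n : ℕ, ∏ j ∈ Finset.range n, (x + ε j) =
      x ^ n + x ^ (n - 1) * ∑ j ∈ Finset.range n, ε j
  | 0 => by simp
  | 1 => by simp
  | (n+2) => by
    rw [Finset.prod_range_succ, prod_add_nilpotent x ε hε (n+1)]
    have hS : (∑ j ∈ Finset.range (n+1), ε j) * ε (n+1) = 0 := by
      rw [Finset.sum_mul]
      exact Finset.sum_eq_zero fun i _ => hε i (n+1)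
    have e1 : ∑ j ∈ Finset.range (n+2), ε j = (∑ j ∈ Finset.range (n+1), ε j) + ε (n+1) :=
      Finset.sum_range_succ ε (n+1)
    have h1 : (n + 2 : ℕ) - 1 = n + 1 := rfl
    have h2 : (n + 1 : ℕ) - 1 = n := rfl
    rw [h1, h2, pow_succ x (n+1), pow_succ x n]
    linear_combination (- (x ^ n * x)) * e1 + (x ^ n) * hS
  termination_by n => n

lemma add_pow_nilpotent {R : Type*} [CommRing R] (a b : R) (hb : b * b = 0) :
    ∀ n : ℕ, (a + b) ^ n = a ^ n + n * a ^ (n - 1) * b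
  | 0 => by simp
  | 1 => by simp
  | (n+2) => by
    rw [pow_succ, add_pow_nilpotent a b hb (n+1)]
    have h1 : (n + 2 : ℕ) - 1 = n + 1 := rfl
    have h2 : (n + 1 : ℕ) - 1 = n := rfl
    rw [h1, h2, pow_succ a (n+1), pow_succ a n]
    push_cast
    linear_combination (((n : R) + 1) * a ^ n) * hb
  termination_by n => n

lemma add_pow_nilpotent_mul {R : Type*} [CommRing R] (a b : R) (hb : b * b = 0) (n : ℕ) :
    (a + b) ^ n * b = a ^ n * b := by
  rw [add_pow_nilpotent a b hb n]
  linear_combination ((n : R) * a ^ (n-1)) * hb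

/-- one column of the product: `∏_{j<len} (c + 4pj)` -/
def colProd (p len c : ℕ) : ℕ := ∏ j ∈ Finset.range len, (c + 4*p*j)

lemma sum_range_id_eq (n m : ℕ) (h : n * (n-1) = 2*m) : (∑ j ∈ Finset.range n, j) = m := by
  have h2 := Finset.sum_range_id_mul_two n
  rw [h] at h2; omega

lemma hp2' (p : ℕ) : ((p : ZMod (p^2)))^2 = 0 := by
  have := ZMod.natCast_self (p^2); push_cast at this; exact this

lemma colProd_eval (p c n m : ℕ) (hm : n * (n-1) = 2*m) :
    ((colProd p n c : ℕ) : ZMod (p^2)) =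
      (c : ZMod (p^2))^n + (c : ZMod (p^2))^(n-1) * ((4*p*m : ℕ) : ZMod (p^2)) := by
  unfold colProd
  push_cast
  rw [prod_add_nilpotent (c : ZMod (p^2)) (fun j => 4*(p:ZMod (p^2))*(j:ℕ)) ?_ n]
  · have hs : (∑ j ∈ Finset.range n, 4*(p:ZMod (p^2))*(j:ℕ)) = 4*(p:ZMod (p^2))*(m:ℕ) := by
      rw [← Finset.mul_sum]
      rw [show (∑ j ∈ Finset.range n, ((j:ℕ) : ZMod (p^2))) = ((∑ j ∈ Finset.range n, j : ℕ) : ZMod (p^2)) from (Nat.cast_sum _ _).symm]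
      rw [sum_range_id_eq n m hm]
    rw [hs]
  · intro i j
    have h2 := hp2' p
    push_cast
    linear_combination (16*(i:ZMod (p^2))*(j:ZMod (p^2))) * h2

lemma lemM (p t x : ℕ) (hp : p = 4*t+3) (hx : x ≤ 4*p) :
    ((p : ZMod (p^2)) - (x : ℕ)) * ((colProd p (2*t+1) (4*p - x) : ℕ) : ZMod (p^2))
      = ((colProd p (2*t+2) x : ℕ) : ZMod (p^2)) := by
  have h2 : ((p : ZMod (p^2)))^2 = 0 := hp2' p
  rw [colProd_eval p (4*p-x) (2*t+1) (2*t^2+t)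
      (by rw [show (2*t+1)-1 = 2*t by omega]; ring),
    colProd_eval p x (2*t+2) (2*t^2+3*t+1)
      (by rw [show (2*t+2)-1 = 2*t+1 by omega]; ring),
    show (2*t+1)-1 = 2*t by omega, show (2*t+2)-1 = 2*t+1 by omega,
    Nat.cast_sub hx]
  push_cast
  set X := (x : ZMod (p^2)) with hX
  set P := (p : ZMod (p^2)) with hPdef
  set τ := (t : ZMod (p^2)) with hτ
  have hP : P = 4*τ+3 := by
    rw [hPdef, hτ]
    have := congrArg (fun n : ℕ => (n : ZMod (p^2))) hp
    push_cast at this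
    exact this
  have hb : (4*P)*(4*P) = 0 := by linear_combination (16 : ZMod (p^2))*h2
  have hrw : 4*P - X = (-X) + 4*P := by ring
  rw [hrw]
  have hmul := add_pow_nilpotent_mul (-X) (4*P) hb (2*t)
  rw [Even.neg_pow ⟨t, by ring⟩] at hmul
  have hpow := add_pow_nilpotent (-X) (4*P) hb (2*t+1)
  rw [show (2*t+1)-1 = 2*t by omega, Odd.neg_pow ⟨t, by ring⟩,
    Even.neg_pow ⟨t, by ring⟩] at hpow
  push_cast at hpow
  linear_combination (P - X) * hpow + ((P - X)*(2*τ^2+τ)) * hmul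
    + (- P*X^(2*t+1) + 4*X^(2*t)*(2*τ^2+3*τ+1)) * h2
    + (P*X^(2*t+1)*(P + 4*τ+3)) * hP

lemma A_to_M (p t : ℕ) (hp : p = 4*t+3) :
    ∏ k ∈ Finset.Icc 1 ((p^2-1)/2), (4*k-1) =
      ∏ m ∈ (Finset.range (2*p^2)).filter (fun m => m % 4 = 3), m := by
  have hsq : p^2 = 16*t^2+24*t+9 := by rw [hp]; ring
  apply Finset.prod_nbij' (fun k => 4*k-1) (fun m => (m+1)/4)
  · intro k hk
    simp only [Finset.mem_Icc] at hk
    simp only [Finset.mem_filter, Finset.mem_range]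
    omega
  · intro m hm
    simp only [Finset.mem_filter, Finset.mem_range] at hm
    simp only [Finset.mem_Icc]
    omega
  · intro k hk
    simp only [Finset.mem_Icc] at hk
    omega
  · intro m hm
    simp only [Finset.mem_filter, Finset.mem_range] at hm
    omega
  · intro k hk
    rfl

lemma B_to_M (p t : ℕ) (hp : p = 4*t+3) :
    ∏ k ∈ Finset.Icc 1 ((p^2-1)/2), (4*k+1) =
      ∏ m ∈ (Finset.range (2*p^2)).filter (fun m => m % 4 = 1), m := by
  have hsq : p^2 = 16*t^2+24*t+9 := by rw [hp]; ring
  have h0 : ∏ k ∈ Finset.Icc 1 ((p^2-1)/2), (4*k+1)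
      = ∏ k ∈ Finset.range ((p^2-1)/2+1), (4*k+1) := by
    apply Finset.prod_subset
    · intro k hk
      simp only [Finset.mem_Icc] at hk
      simp only [Finset.mem_range]
      omega
    · intro k hk hk2
      simp only [Finset.mem_range] at hk
      simp only [Finset.mem_Icc] at hk2
      have : k = 0 := by omega
      simp [this]
  rw [h0]
  apply Finset.prod_nbij' (fun k => 4*k+1) (fun m => m/4)
  · intro k hk
    simp only [Finset.mem_range] at hk
    simp only [Finset.mem_filter, Finset.mem_range]
    omega
  · intro m hm
    simp only [Finset.mem_filter, Finset.mem_range] at hm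
    simp only [Finset.mem_range]
    omega
  · intro k hk
    simp only [Finset.mem_range] at hk
    omega
  · intro m hm
    simp only [Finset.mem_filter, Finset.mem_range] at hm
    omega
  · intro k hk
    rfl

lemma M_to_cols (p t r : ℕ) (hp : p = 4*t+3) :
    ∏ m ∈ (Finset.range (2*p^2)).filter (fun m => m % 4 = r), m =
      (∏ c ∈ (Finset.range (2*p)).filter (fun c => c % 4 = r), colProd p (2*t+2) c) *
      (∏ c ∈ (Finset.Ico (2*p) (4*p)).filter (fun c => c % 4 = r), colProd p (2*t+1) c) := by
  have hsq : p^2 = 16*t^2+24*t+9 := by rw [hp]; ring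
  have hb0 : 4*p*(2*t) = 32*t^2+24*t := by rw [hp]; ring
  have hb1 : 4*p*(2*t+1) = 32*t^2+40*t+12 := by rw [hp]; ring
  have hb2 : 4*p*(2*t+2) = 32*t^2+56*t+24 := by rw [hp]; ring
  have hppos : 0 < 4*p := by omega
  have hm4 : ∀ x : ℕ × ℕ, (x.1 + 4*p*x.2) % 4 = x.1 % 4 := by
    intro x
    rw [show x.1 + 4*p*x.2 = x.1 + (p*x.2)*4 by ring, Nat.add_mul_mod_self_right]
  have hmod2 : ∀ x : ℕ × ℕ, x.1 < 4*p → (x.1 + 4*p*x.2) % (4*p) = x.1 := by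
    intro x hx1
    rw [show x.1 + 4*p*x.2 = x.1 + x.2*(4*p) by ring, Nat.add_mul_mod_self_right,
      Nat.mod_eq_of_lt hx1]
  have hdiv2 : ∀ x : ℕ × ℕ, x.1 < 4*p → (x.1 + 4*p*x.2) / (4*p) = x.2 := by
    intro x hx1
    rw [show x.1 + 4*p*x.2 = x.1 + x.2*(4*p) by ring, Nat.add_mul_div_right _ _ hppos,
      Nat.div_eq_of_lt hx1]
    omega
  rw [← Finset.prod_filter_mul_prod_filter_not
      ((Finset.range (2*p^2)).filter (fun m => m % 4 = r)) (fun m => m % (4*p) < 2*p)]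
  congr 1
  · -- long columns
    rw [show (∏ c ∈ (Finset.range (2*p)).filter (fun c => c % 4 = r), colProd p (2*t+2) c)
        = ∏ x ∈ ((Finset.range (2*p)).filter (fun c => c % 4 = r)) ×ˢ Finset.range (2*t+2),
            (x.1 + 4*p*x.2) by
          unfold colProd
          exact (Finset.prod_product' _ _ (fun c j => c + 4*p*j)).symm]
    apply Finset.prod_nbij' (fun m => (m % (4*p), m / (4*p))) (fun x => x.1 + 4*p*x.2)
    · intro m hm
      simp only [Finset.mem_filter, Finset.mem_range] at hm
      obtain ⟨⟨hmlt, hmr⟩, hmod⟩ := hm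
      have hdm := Nat.div_add_mod m (4*p)
      have hc4 : m % (4*p) % 4 = m % 4 := Nat.mod_mod_of_dvd m ⟨p, rfl⟩
      simp only [Finset.mem_product, Finset.mem_filter, Finset.mem_range]
      refine ⟨⟨hmod, by omega⟩, ?_⟩
      rcases Nat.lt_or_ge (m / (4*p)) (2*t+2) with h | h
      · exact h
      · exfalso
        have h5 := Nat.mul_le_mul_left (4*p) h
        omega
    · intro x hx
      simp only [Finset.mem_product, Finset.mem_filter, Finset.mem_range] at hx
      obtain ⟨⟨hc2p, hcr⟩, hj⟩ := hx
      have h5 := Nat.mul_le_mul_left (4*p) (show x.2 ≤ 2*t+1 by omega)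
      have h6 := hm4 x
      have h7 := hmod2 x (by omega)
      simp only [Finset.mem_filter, Finset.mem_range]
      exact ⟨⟨by omega, by omega⟩, by omega⟩
    · intro m hm
      have hdm := Nat.div_add_mod m (4*p)
      show m % (4*p) + 4*p*(m/(4*p)) = m
      omega
    · intro x hx
      simp only [Finset.mem_product, Finset.mem_filter, Finset.mem_range] at hx
      obtain ⟨⟨hc2p, hcr⟩, hj⟩ := hx
      exact Prod.ext (hmod2 x (by omega)) (hdiv2 x (by omega))
    · intro m hm
      have hdm := Nat.div_add_mod m (4*p)
      show m = m % (4*p) + 4*p*(m/(4*p))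
      omega
  · -- short columns
    rw [show (∏ c ∈ (Finset.Ico (2*p) (4*p)).filter (fun c => c % 4 = r), colProd p (2*t+1) c)
        = ∏ x ∈ ((Finset.Ico (2*p) (4*p)).filter (fun c => c % 4 = r)) ×ˢ Finset.range (2*t+1),
            (x.1 + 4*p*x.2) by
          unfold colProd
          exact (Finset.prod_product' _ _ (fun c j => c + 4*p*j)).symm]
    apply Finset.prod_nbij' (fun m => (m % (4*p), m / (4*p))) (fun x => x.1 + 4*p*x.2)
    · intro m hm
      simp only [Finset.mem_filter, Finset.mem_range] at hm
      obtain ⟨⟨hmlt, hmr⟩, hmod⟩ := hm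
      have hdm := Nat.div_add_mod m (4*p)
      have hc4 : m % (4*p) % 4 = m % 4 := Nat.mod_mod_of_dvd m ⟨p, rfl⟩
      have hclt : m % (4*p) < 4*p := Nat.mod_lt m hppos
      simp only [Finset.mem_product, Finset.mem_filter, Finset.mem_Ico, Finset.mem_range]
      refine ⟨⟨⟨by omega, hclt⟩, by omega⟩, ?_⟩
      rcases Nat.lt_or_ge (m / (4*p)) (2*t+1) with h | h
      · exact h
      · exfalso
        have h5 := Nat.mul_le_mul_left (4*p) h
        omega
    · intro x hx
      simp only [Finset.mem_product, Finset.mem_filter, Finset.mem_Ico, Finset.mem_range] at hx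
      obtain ⟨⟨⟨hc2p, hc4p⟩, hcr⟩, hj⟩ := hx
      have h5 := Nat.mul_le_mul_left (4*p) (show x.2 ≤ 2*t by omega)
      have h6 := hm4 x
      have h7 := hmod2 x (by omega)
      simp only [Finset.mem_filter, Finset.mem_range]
      exact ⟨⟨by omega, by omega⟩, by omega⟩
    · intro m hm
      have hdm := Nat.div_add_mod m (4*p)
      show m % (4*p) + 4*p*(m/(4*p)) = m
      omega
    · intro x hx
      simp only [Finset.mem_product, Finset.mem_filter, Finset.mem_Ico, Finset.mem_range] at hx
      obtain ⟨⟨⟨hc2p, hc4p⟩, hcr⟩, hj⟩ := hx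
      exact Prod.ext (hmod2 x (by omega)) (hdiv2 x (by omega))
    · intro m hm
      have hdm := Nat.div_add_mod m (4*p)
      show m = m % (4*p) + 4*p*(m/(4*p))
      omega

def Wa (t : ℕ) : ℕ := ∏ i ∈ Finset.range (2*t+2), (4*i+1)
def Wb (t : ℕ) : ℕ := ∏ j ∈ (Finset.range (2*t+1)).erase t, (4*j+3)
def Ua (p t : ℕ) : ℕ :=
  (∏ c ∈ ((Finset.range (2*p)).filter (fun c => c % 4 = 3)).erase p, colProd p (2*t+2) c) *
  (∏ c ∈ (Finset.Ico (2*p) (4*p)).filter (fun c => c % 4 = 3), colProd p (2*t+1) c)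
def Ub (p t : ℕ) : ℕ :=
  (∏ c ∈ (Finset.range (2*p)).filter (fun c => c % 4 = 1), colProd p (2*t+2) c) *
  (∏ c ∈ ((Finset.Ico (2*p) (4*p)).filter (fun c => c % 4 = 1)).erase (3*p), colProd p (2*t+1) c)

lemma colL_p (p t : ℕ) :
    colProd p (2*t+2) p = p^(2*t+2) * ∏ i ∈ Finset.range (2*t+2), (4*i+1) := by
  unfold colProd
  rw [show (∏ j ∈ Finset.range (2*t+2), (p + 4*p*j)) = ∏ j ∈ Finset.range (2*t+2), (p * (4*j+1))
    from Finset.prod_congr rfl (fun j _ => by ring)]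
  rw [Finset.prod_mul_distrib, Finset.prod_const, Finset.card_range]

lemma colS_3p (p t : ℕ) (hp : p = 4*t+3) :
    colProd p (2*t+1) (3*p) = p^(2*t+2) * Wb t := by
  unfold colProd
  rw [show (∏ j ∈ Finset.range (2*t+1), (3*p + 4*p*j)) = ∏ j ∈ Finset.range (2*t+1), (p * (4*j+3))
    from Finset.prod_congr rfl (fun j _ => by ring)]
  rw [Finset.prod_mul_distrib, Finset.prod_const, Finset.card_range]
  rw [← Finset.mul_prod_erase (Finset.range (2*t+1)) (fun j => 4*j+3)
    (show t ∈ Finset.range (2*t+1) by simp only [Finset.mem_range]; omega)]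
  unfold Wb
  rw [show 4*t+3 = p from hp.symm]
  ring

lemma A_fact (p t : ℕ) (hp : p = 4*t+3) :
    ∏ k ∈ Finset.Icc 1 ((p^2-1)/2), (4*k-1) = p^(2*t+2) * (Wa t * Ua p t) := by
  rw [A_to_M p t hp, M_to_cols p t 3 hp]
  have hpmem : p ∈ (Finset.range (2*p)).filter (fun c => c % 4 = 3) := by
    simp only [Finset.mem_filter, Finset.mem_range]
    omega
  rw [← Finset.mul_prod_erase _ _ hpmem, colL_p p t]
  unfold Wa Ua
  ring

lemma B_fact (p t : ℕ) (hp : p = 4*t+3) :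
    ∏ k ∈ Finset.Icc 1 ((p^2-1)/2), (4*k+1) = p^(2*t+2) * (Wb t * Ub p t) := by
  rw [B_to_M p t hp, M_to_cols p t 1 hp]
  have hpmem : 3*p ∈ (Finset.Ico (2*p) (4*p)).filter (fun c => c % 4 = 1) := by
    simp only [Finset.mem_filter, Finset.mem_Ico]
    omega
  rw [← Finset.mul_prod_erase _ _ hpmem, colS_3p p t hp]
  unfold Ub
  ring

lemma not_dvd_of_lt_forms (p c : ℕ) (hprime : p.Prime) (hc : c < 4*p)
    (h0 : c ≠ 0) (h1 : c ≠ p) (h2 : c ≠ 2*p) (h3 : c ≠ 3*p) : ¬ p ∣ c := by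
  rintro ⟨d, hd⟩
  have hd4 : d < 4 := by
    rcases Nat.lt_or_ge d 4 with h | h
    · exact h
    · exfalso
      have := Nat.mul_le_mul_left p h
      omega
  interval_cases d <;> omega

lemma b_not_dvd (p t : ℕ) (hp : p = 4*t+3) (hprime : p.Prime) : ¬ p ∣ (Wb t * Ub p t) := by
  haveI : Fact p.Prime := ⟨hprime⟩
  have hchar : ∀ m : ℕ, (m : ZMod p) = 0 ↔ p ∣ m := fun m => ZMod.natCast_eq_zero_iff m p
  intro hdvd
  have : ((Wb t * Ub p t : ℕ) : ZMod p) = 0 := (hchar _).mpr hdvd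
  rw [Nat.cast_mul] at this
  rcases mul_eq_zero.mp this with h | h
  · -- Wb part
    unfold Wb at h
    rw [Nat.cast_prod] at h
    obtain ⟨j, hj, hj0⟩ := Finset.prod_eq_zero_iff.mp h
    simp only [Finset.mem_erase, Finset.mem_range] at hj
    have : p ∣ (4*j+3) := (hchar _).mp (by exact_mod_cast hj0)
    obtain ⟨d, hd⟩ := this
    have hd2 : d < 2 := by
      rcases Nat.lt_or_ge d 2 with h' | h'
      · exact h'
      · exfalso
        have := Nat.mul_le_mul_left p h'
        omega
    interval_cases d <;> omega
  · -- Ub part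
    unfold Ub at h
    rw [Nat.cast_mul] at h
    have hcol : ∀ c : ℕ, ¬ p ∣ c → ((colProd p (2*t+1) c : ℕ) : ZMod p) ≠ 0 ∧
        ((colProd p (2*t+2) c : ℕ) : ZMod p) ≠ 0 := by
      intro c hc
      have hcast : ∀ n : ℕ, ((colProd p n c : ℕ) : ZMod p) = (c : ZMod p)^n := by
        intro n
        unfold colProd
        rw [Nat.cast_prod]
        rw [show (∏ j ∈ Finset.range n, ((c + 4*p*j : ℕ) : ZMod p))
            = ∏ j ∈ Finset.range n, (c : ZMod p) by
          apply Finset.prod_congr rfl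
          intro j _
          push_cast
          rw [ZMod.natCast_self]
          ring]
        rw [Finset.prod_const, Finset.card_range]
      have hcne : (c : ZMod p) ≠ 0 := fun h' => hc ((hchar c).mp h')
      constructor <;> rw [hcast] <;> exact pow_ne_zero _ hcne
    rcases mul_eq_zero.mp h with h' | h'
    · rw [Nat.cast_prod] at h'
      obtain ⟨c, hcmem, hc0⟩ := Finset.prod_eq_zero_iff.mp h'
      simp only [Finset.mem_filter, Finset.mem_range] at hcmem
      exact (hcol c (not_dvd_of_lt_forms p c hprime (by omega) (by omega) (by omega) (by omega)
        (by omega))).2 hc0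
    · rw [Nat.cast_prod] at h'
      obtain ⟨c, hcmem, hc0⟩ := Finset.prod_eq_zero_iff.mp h'
      simp only [Finset.mem_erase, Finset.mem_filter, Finset.mem_Ico] at hcmem
      exact (hcol c (not_dvd_of_lt_forms p c hprime (by omega) (by omega) (by omega) (by omega)
        (by omega))).1 hc0

lemma isUnit_cast (p c : ℕ) (hprime : p.Prime) (hc : ¬ p ∣ c) : IsUnit (c : ZMod (p^2)) := by
  rw [ZMod.isUnit_iff_coprime]
  exact (((Nat.Prime.coprime_iff_not_dvd hprime).mpr hc).symm).pow_right 2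

lemma invol_prod (p t r : ℕ) (hp : p = 4*t+3) (hprime : p.Prime) (F : Finset ℕ)
    (hF : ∀ c ∈ F, c % 4 = r ∧ 0 < c ∧ c < 2*p ∧ c ≠ p)
    (hclosed : ∀ c ∈ F, 2*p - c ∈ F) :
    ∏ c ∈ F, ((p : ZMod (p^2)) - (c : ℕ)) = ∏ c ∈ F, ((c : ℕ) : ZMod (p^2)) := by
  have h2 := hp2' p
  have hunit : ∀ c ∈ F, IsUnit ((c : ℕ) : ZMod (p^2)) := by
    intro c hc
    obtain ⟨hr, h0, hlt, hne⟩ := hF c hc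
    exact isUnit_cast p c hprime (not_dvd_of_lt_forms p c hprime (by omega) (by omega)
      (by omega) (by omega) (by omega))
  have key : ∏ c ∈ F, (((p : ZMod (p^2)) - c) * ((c : ℕ) : ZMod (p^2))⁻¹) = 1 := by
    apply Finset.prod_involution (g := fun c _ => 2*p - c)
    · intro c hc
      obtain ⟨hr, h0, hlt, hne⟩ := hF c hc
      have hcast : ((2*p - c : ℕ) : ZMod (p^2)) = 2*(p : ZMod (p^2)) - c := by
        push_cast [Nat.cast_sub (show c ≤ 2*p by omega)]
        ring
      have hmain : ((p : ZMod (p^2)) - c) * ((p : ZMod (p^2)) - ((2*p - c : ℕ) : ZMod (p^2)))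
          = ((c : ℕ) : ZMod (p^2)) * ((2*p - c : ℕ) : ZMod (p^2)) := by
        rw [hcast]
        linear_combination (-1 : ZMod (p^2)) * h2
      have hu1 := hunit c hc
      have hu2 := hunit _ (hclosed c hc)
      calc ((p : ZMod (p^2)) - c) * ((c:ℕ) : ZMod (p^2))⁻¹ *
            (((p : ZMod (p^2)) - ((2*p - c : ℕ):ZMod (p^2))) * (((2*p - c : ℕ):ZMod (p^2)))⁻¹)
          = (((p : ZMod (p^2)) - c) * ((p : ZMod (p^2)) - ((2*p - c : ℕ):ZMod (p^2)))) *
            (((c:ℕ) : ZMod (p^2))⁻¹ * (((2*p - c : ℕ):ZMod (p^2)))⁻¹) := by ring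
        _ = (((c : ℕ):ZMod (p^2)) * ((2*p - c : ℕ):ZMod (p^2))) *
            (((c:ℕ) : ZMod (p^2))⁻¹ * (((2*p - c : ℕ):ZMod (p^2)))⁻¹) := by rw [hmain]
        _ = (((c : ℕ):ZMod (p^2)) * ((c:ℕ) : ZMod (p^2))⁻¹) *
            (((2*p - c : ℕ):ZMod (p^2)) * (((2*p - c : ℕ):ZMod (p^2)))⁻¹) := by ring
        _ = 1 := by rw [ZMod.mul_inv_of_unit _ hu1, ZMod.mul_inv_of_unit _ hu2]; ring
    · intro c hc _
      obtain ⟨hr, h0, hlt, hne⟩ := hF c hc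
      omega
    · exact fun c hc => hclosed c hc
    · intro c hc
      obtain ⟨hr, h0, hlt, hne⟩ := hF c hc
      omega
  have hinv : (∏ c ∈ F, (((c : ℕ) : ZMod (p^2))⁻¹)) * (∏ c ∈ F, ((c : ℕ) : ZMod (p^2))) = 1 := by
    rw [← Finset.prod_mul_distrib]
    rw [show (∏ c ∈ F, (((c:ℕ) : ZMod (p^2))⁻¹ * ((c:ℕ) : ZMod (p^2)))) = ∏ c ∈ F, 1 from
      Finset.prod_congr rfl (fun c hc => by
        rw [mul_comm, ZMod.mul_inv_of_unit _ (hunit c hc)])]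
    simp
  rw [Finset.prod_mul_distrib] at key
  calc (∏ c ∈ F, ((p : ZMod (p^2)) - (c:ℕ)))
      = (∏ c ∈ F, ((p : ZMod (p^2)) - (c:ℕ))) *
        ((∏ c ∈ F, (((c : ℕ) : ZMod (p^2))⁻¹)) * (∏ c ∈ F, ((c : ℕ) : ZMod (p^2)))) := by
        rw [hinv, mul_one]
    _ = ((∏ c ∈ F, ((p : ZMod (p^2)) - (c:ℕ))) * (∏ c ∈ F, (((c : ℕ) : ZMod (p^2))⁻¹))) *
        (∏ c ∈ F, ((c : ℕ) : ZMod (p^2))) := by ring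
    _ = ∏ c ∈ F, ((c : ℕ) : ZMod (p^2)) := by rw [key, one_mul]

lemma key_cong (p t : ℕ) (hp : p = 4*t+3) (hprime : p.Prime) :
    ((Wa t * Ua p t : ℕ) : ZMod (p^2)) = ((Wb t * Ub p t : ℕ) : ZMod (p^2)) := by
  have stepA : (∏ c ∈ ((Finset.range (2*p)).filter (fun c => c % 4 = 3)).erase p,
        ((colProd p (2*t+2) c : ℕ) : ZMod (p^2)))
      = (∏ c ∈ ((Finset.range (2*p)).filter (fun c => c % 4 = 3)).erase p,
          ((p : ZMod (p^2)) - (c : ℕ))) *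
        (∏ c ∈ ((Finset.Ico (2*p) (4*p)).filter (fun c => c % 4 = 1)).erase (3*p),
          ((colProd p (2*t+1) c : ℕ) : ZMod (p^2))) := by
    rw [Finset.prod_congr rfl (show ∀ c ∈ ((Finset.range (2*p)).filter (fun c => c % 4 = 3)).erase p,
        ((colProd p (2*t+2) c : ℕ) : ZMod (p^2))
          = ((p : ZMod (p^2)) - (c : ℕ)) * ((colProd p (2*t+1) (4*p - c) : ℕ) : ZMod (p^2)) by
      intro c hc
      simp only [Finset.mem_erase, Finset.mem_filter, Finset.mem_range] at hc
      exact (lemM p t c hp (by omega)).symm)]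
    rw [Finset.prod_mul_distrib]
    congr 1
    apply Finset.prod_nbij' (fun c => 4*p - c) (fun d => 4*p - d)
    · intro c hc
      simp only [Finset.mem_erase, Finset.mem_filter, Finset.mem_range] at hc
      simp only [Finset.mem_erase, Finset.mem_filter, Finset.mem_Ico]
      omega
    · intro d hd
      simp only [Finset.mem_erase, Finset.mem_filter, Finset.mem_Ico] at hd
      simp only [Finset.mem_erase, Finset.mem_filter, Finset.mem_range]
      omega
    · intro c hc
      simp only [Finset.mem_erase, Finset.mem_filter, Finset.mem_range] at hc
      omega
    · intro d hd
      simp only [Finset.mem_erase, Finset.mem_filter, Finset.mem_Ico] at hd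
      omega
    · intro c hc
      rfl
  have stepB : (∏ d ∈ (Finset.range (2*p)).filter (fun c => c % 4 = 1),
        ((colProd p (2*t+2) d : ℕ) : ZMod (p^2)))
      = (∏ d ∈ (Finset.range (2*p)).filter (fun c => c % 4 = 1),
          ((p : ZMod (p^2)) - (d : ℕ))) *
        (∏ c ∈ (Finset.Ico (2*p) (4*p)).filter (fun c => c % 4 = 3),
          ((colProd p (2*t+1) c : ℕ) : ZMod (p^2))) := by
    rw [Finset.prod_congr rfl (show ∀ d ∈ (Finset.range (2*p)).filter (fun c => c % 4 = 1),
        ((colProd p (2*t+2) d : ℕ) : ZMod (p^2))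
          = ((p : ZMod (p^2)) - (d : ℕ)) * ((colProd p (2*t+1) (4*p - d) : ℕ) : ZMod (p^2)) by
      intro d hd
      simp only [Finset.mem_filter, Finset.mem_range] at hd
      exact (lemM p t d hp (by omega)).symm)]
    rw [Finset.prod_mul_distrib]
    congr 1
    apply Finset.prod_nbij' (fun c => 4*p - c) (fun d => 4*p - d)
    · intro c hc
      simp only [Finset.mem_filter, Finset.mem_range] at hc
      simp only [Finset.mem_filter, Finset.mem_Ico]
      omega
    · intro d hd
      simp only [Finset.mem_filter, Finset.mem_Ico] at hd
      simp only [Finset.mem_filter, Finset.mem_range]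
      omega
    · intro c hc
      simp only [Finset.mem_filter, Finset.mem_range] at hc
      omega
    · intro d hd
      simp only [Finset.mem_filter, Finset.mem_Ico] at hd
      omega
    · intro c hc
      rfl
  have stepC1 : (∏ c ∈ ((Finset.range (2*p)).filter (fun c => c % 4 = 3)).erase p,
        ((p : ZMod (p^2)) - (c : ℕ)))
      = ∏ c ∈ ((Finset.range (2*p)).filter (fun c => c % 4 = 3)).erase p, ((c : ℕ) : ZMod (p^2)) := by
    apply invol_prod p t 3 hp hprime
    · intro c hc
      simp only [Finset.mem_erase, Finset.mem_filter, Finset.mem_range] at hc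
      omega
    · intro c hc
      simp only [Finset.mem_erase, Finset.mem_filter, Finset.mem_range] at hc ⊢
      omega
  have stepC2 : (∏ c ∈ (Finset.range (2*p)).filter (fun c => c % 4 = 1),
        ((p : ZMod (p^2)) - (c : ℕ)))
      = ∏ c ∈ (Finset.range (2*p)).filter (fun c => c % 4 = 1), ((c : ℕ) : ZMod (p^2)) := by
    apply invol_prod p t 1 hp hprime
    · intro c hc
      simp only [Finset.mem_filter, Finset.mem_range] at hc
      omega
    · intro c hc
      simp only [Finset.mem_filter, Finset.mem_range] at hc ⊢
      omega
  have stepD1 : (∏ c ∈ ((Finset.range (2*p)).filter (fun c => c % 4 = 3)).erase p,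
        ((c : ℕ) : ZMod (p^2))) = ((Wb t : ℕ) : ZMod (p^2)) := by
    unfold Wb
    rw [Nat.cast_prod]
    apply Finset.prod_nbij' (fun c => (c-3)/4) (fun j => 4*j+3)
    · intro c hc
      simp only [Finset.mem_erase, Finset.mem_filter, Finset.mem_range] at hc
      simp only [Finset.mem_erase, Finset.mem_range]
      omega
    · intro j hj
      simp only [Finset.mem_erase, Finset.mem_range] at hj
      simp only [Finset.mem_erase, Finset.mem_filter, Finset.mem_range]
      omega
    · intro c hc
      simp only [Finset.mem_erase, Finset.mem_filter, Finset.mem_range] at hc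
      omega
    · intro j hj
      omega
    · intro c hc
      simp only [Finset.mem_erase, Finset.mem_filter, Finset.mem_range] at hc
      exact_mod_cast congrArg (fun n : ℕ => (n : ZMod (p^2))) (show (c:ℕ) = 4*((c-3)/4)+3 by omega)
  have stepD2 : (∏ c ∈ (Finset.range (2*p)).filter (fun c => c % 4 = 1),
        ((c : ℕ) : ZMod (p^2))) = ((Wa t : ℕ) : ZMod (p^2)) := by
    unfold Wa
    rw [Nat.cast_prod]
    apply Finset.prod_nbij' (fun c => (c-1)/4) (fun i => 4*i+1)
    · intro c hc
      simp only [Finset.mem_filter, Finset.mem_range] at hc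
      simp only [Finset.mem_range]
      omega
    · intro i hi
      simp only [Finset.mem_range] at hi
      simp only [Finset.mem_filter, Finset.mem_range]
      omega
    · intro c hc
      simp only [Finset.mem_filter, Finset.mem_range] at hc
      omega
    · intro i hi
      omega
    · intro c hc
      simp only [Finset.mem_filter, Finset.mem_range] at hc
      exact_mod_cast congrArg (fun n : ℕ => (n : ZMod (p^2))) (show (c:ℕ) = 4*((c-1)/4)+1 by omega)
  unfold Ua Ub
  push_cast
  rw [stepA, stepB, stepC1, stepC2, stepD1, stepD2]
  push_cast
  ring

theorem swisher_consequence (p : ℕ) [Fact p.Prime] (h4 : p % 4 = 3) (S P : ℚ_[p])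
    (hS : S = ∑ k ∈ Finset.range ((p ^ 2 - 1) / 2 + 1),
        ((∏ j ∈ Finset.range k, ((1 : ℚ_[p]) / 2 + (j : ℚ_[p]))) / (k.factorial : ℚ_[p])) ^ 3)
    (hP : P = ∏ k ∈ Finset.Icc 1 (((p ^ 2 - 1) / 2 : ℕ)),
        ((4 * (k : ℚ_[p]) - 1) / (4 * (k : ℚ_[p]) + 1)))
    (hyp : ∃ z : ℤ_[p], S - (p : ℚ_[p]) ^ 2 * P = (p : ℚ_[p]) ^ 4 * (z : ℚ_[p])) :
    ∃ z : ℤ_[p], S - (p : ℚ_[p]) ^ 2 = (p : ℚ_[p]) ^ 4 * (z : ℚ_[p]) := by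
  obtain ⟨z, hz⟩ := hyp
  have hprime : p.Prime := Fact.out
  obtain ⟨t, hp⟩ : ∃ t, p = 4*t+3 := ⟨p/4, by omega⟩
  have hA := A_fact p t hp
  have hB := B_fact p t hp
  have hbnd : ¬ p ∣ (Wb t * Ub p t) := b_not_dvd p t hp hprime
  have hpne : (p : ℚ_[p]) ≠ 0 := Nat.cast_ne_zero.mpr (by omega)
  -- P = a / b
  have hPab : P = ((Wa t * Ua p t : ℕ) : ℚ_[p]) / ((Wb t * Ub p t : ℕ) : ℚ_[p]) := by
    rw [hP]
    rw [Finset.prod_congr rfl (show ∀ k ∈ Finset.Icc (1:ℕ) ((p^2-1)/2),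
        (4 * (k : ℚ_[p]) - 1) / (4 * (k : ℚ_[p]) + 1)
          = ((4*k-1 : ℕ) : ℚ_[p]) / ((4*k+1 : ℕ) : ℚ_[p]) by
      intro k hk
      simp only [Finset.mem_Icc] at hk
      rw [Nat.cast_sub (show (1:ℕ) ≤ 4*k by omega)]
      push_cast
      ring)]
    rw [Finset.prod_div_distrib, ← Nat.cast_prod, ← Nat.cast_prod, hA, hB]
    push_cast
    rw [mul_div_mul_left _ _ (pow_ne_zero (2*t+2) hpne)]
  -- the unit u = b⁻¹ in ℤ_[p]
  have hbd : ¬ ((p:ℤ) ∣ ((Wb t * Ub p t : ℕ) : ℤ)) := by exact_mod_cast hbnd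
  have hnorm : ‖(((Wb t * Ub p t : ℕ) : ℤ_[p]))‖ = 1 := by
    have h1 := PadicInt.norm_le_one (((Wb t * Ub p t : ℕ)) : ℤ_[p])
    rcases eq_or_lt_of_le h1 with h | h
    · exact h
    · exfalso
      apply hbd
      rw [← PadicInt.norm_int_lt_one_iff_dvd]
      exact_mod_cast h
  obtain ⟨u, hu⟩ := isUnit_iff_exists_inv.mp (PadicInt.isUnit_iff.mpr hnorm)
  have hub : ((Wb t * Ub p t : ℕ) : ℚ_[p]) * ((u : ℤ_[p]) : ℚ_[p]) = 1 := by
    have := congrArg (fun x : ℤ_[p] => (x : ℚ_[p])) hu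
    push_cast at this
    exact_mod_cast this
  have hbne : ((Wb t * Ub p t : ℕ) : ℚ_[p]) ≠ 0 := left_ne_zero_of_mul_eq_one hub
  have hPau : P = ((Wa t * Ua p t : ℕ) : ℚ_[p]) * ((u : ℤ_[p]) : ℚ_[p]) := by
    rw [hPab, div_eq_iff hbne]
    linear_combination (-((Wa t * Ua p t : ℕ) : ℚ_[p])) * hub
  -- congruence a ≡ b mod p²
  have hmod : (Wa t * Ua p t) ≡ (Wb t * Ub p t) [MOD p^2] :=
    (ZMod.natCast_eq_natCast_iff _ _ _).mp (key_cong p t hp hprime)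
  obtain ⟨w, hw⟩ := hmod.dvd
  have hw' : ((Wb t * Ub p t : ℕ) : ℚ_[p]) - ((Wa t * Ua p t : ℕ) : ℚ_[p])
      = (p : ℚ_[p])^2 * ((w : ℤ) : ℚ_[p]) := by
    have := congrArg (fun n : ℤ => (n : ℚ_[p])) hw
    push_cast at this
    exact_mod_cast this
  refine ⟨z - (w : ℤ_[p]) * u, ?_⟩
  have hcast : (((z - (w : ℤ_[p]) * u) : ℤ_[p]) : ℚ_[p])
      = (z : ℚ_[p]) - ((w:ℤ) : ℚ_[p]) * ((u : ℤ_[p]) : ℚ_[p]) := by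
    push_cast
    ring
  rw [hcast]
  linear_combination hz + (p:ℚ_[p])^2 * hPau + (-((p:ℚ_[p])^2 * ((u : ℤ_[p]) : ℚ_[p]))) * hw'
    + (p:ℚ_[p])^2 * hub
end
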